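/- arXiv:2101.01113 — 16 statements merged into one kernel-verified Lean document; each statement's English description precedes it below -/
import Mathlib

section
/- Let E be a product structure on a 3-Bihom-Lie algebra (L, [·,·,·], α, β). Then L decomposes as a direct sum L = L₊ ⊕ L₋, where L₊ = {x ∈ L : Ex = x} and L₋ = {x ∈ L : Ex = −x} are both Bihom subalgebras of L. -/
/-- A 3-Bihom-Lie algebra over a field `K`: a trilinear bracket together with
commuting multiplicative maps `a` (= α) and `b` (= β), Bihom-skewsymmetry and
the 3-BiHom-Jacobi identity. -/
structure BihomLie3 (K L : Type*) [Field K] [AddCommGroup L] [Module K L] where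
  br : L →ₗ[K] L →ₗ[K] L →ₗ[K] L
  a : L →ₗ[K] L
  b : L →ₗ[K] L
  comm : ∀ x, a (b x) = b (a x)
  a_mul : ∀ x y z, a (br x y z) = br (a x) (a y) (a z)
  b_mul : ∀ x y z, b (br x y z) = br (b x) (b y) (b z)
  skew1 : ∀ x y z, br (b x) (b y) (a z) = - br (b y) (b x) (a z)
  skew2 : ∀ x y z, br (b x) (b y) (a z) = - br (b x) (b z) (a y)
  jacobi : ∀ u v x y z,
    br (b (b u)) (b (b v)) (br (b x) (b y) (a z)) =
      br (b (b y)) (b (b z)) (br (b u) (b v) (a x))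
      - br (b (b x)) (b (b z)) (br (b u) (b v) (a y))
      + br (b (b x)) (b (b y)) (br (b u) (b v) (a z))

variable {K L : Type*} [Field K] [AddCommGroup L] [Module K L]

/-- An almost product structure: `E² = Id`, `αE = Eα`, `βE = Eβ`. -/
def IsAlmostProduct (A : BihomLie3 K L) (E : L →ₗ[K] L) : Prop :=
  (∀ x, E (E x) = x) ∧ (∀ x, A.a (E x) = E (A.a x)) ∧ (∀ x, A.b (E x) = E (A.b x))

/-- The integrability identity of a product structure. -/
def IsProductEq (A : BihomLie3 K L) (E : L →ₗ[K] L) : Prop :=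
  ∀ x y z, E (A.br x y z) =
    A.br (E x) (E y) (E z) + A.br (E x) y z + A.br x (E y) z + A.br x y (E z)
    - E (A.br (E x) (E y) z) - E (A.br x (E y) (E z)) - E (A.br (E x) y (E z))

/-- A product structure. -/
def IsProduct (A : BihomLie3 K L) (E : L →ₗ[K] L) : Prop :=
  IsAlmostProduct A E ∧ IsProductEq A E

/-- A Bihom subalgebra: a subspace closed under `α`, `β` and the bracket. -/
def IsBihomSub (A : BihomLie3 K L) (S : Submodule K L) : Prop :=
  (∀ x ∈ S, A.a x ∈ S) ∧ (∀ x ∈ S, A.b x ∈ S) ∧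
  ∀ x ∈ S, ∀ y ∈ S, ∀ z ∈ S, A.br x y z ∈ S

/-- An almost complex structure: `J² = -Id`, `αJ = Jα`, `βJ = Jβ`. -/
def IsAlmostComplex (A : BihomLie3 K L) (J : L →ₗ[K] L) : Prop :=
  (∀ x, J (J x) = - x) ∧ (∀ x, A.a (J x) = J (A.a x)) ∧ (∀ x, A.b (J x) = J (A.b x))

/-- The integrability identity of a complex structure. -/
def IsComplexEq (A : BihomLie3 K L) (J : L →ₗ[K] L) : Prop :=
  ∀ x y z, J (A.br x y z) =
    - A.br (J x) (J y) (J z) + A.br (J x) y z + A.br x (J y) z + A.br x y (J z)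
    + J (A.br (J x) (J y) z) + J (A.br x (J y) (J z)) + J (A.br (J x) y (J z))

/-- A complex structure. -/
def IsComplex (A : BihomLie3 K L) (J : L →ₗ[K] L) : Prop :=
  IsAlmostComplex A J ∧ IsComplexEq A J

/-- A product structure yields a direct sum decomposition into the ±1 eigenspaces,
which are Bihom subalgebras. -/
theorem product_structure_decomposition (A : BihomLie3 K L) (h2 : (2 : K) ≠ 0)
    (E : L →ₗ[K] L) (hE : IsProduct A E) :
    IsCompl (LinearMap.ker (E - LinearMap.id)) (LinearMap.ker (E + LinearMap.id)) ∧
    IsBihomSub A (LinearMap.ker (E - LinearMap.id)) ∧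
    IsBihomSub A (LinearMap.ker (E + LinearMap.id)) := by
  obtain ⟨⟨hsq, ha, hb⟩, hint⟩ := hE
  have h4ne : (4:K) ≠ 0 := by
    simpa [show (4:K) = 2*2 by norm_num] using mul_ne_zero h2 h2
  have hmemP : ∀ x : L, x ∈ LinearMap.ker (E - LinearMap.id) ↔ E x = x := by
    intro x; simp [LinearMap.mem_ker, sub_eq_zero]
  have hmemM : ∀ x : L, x ∈ LinearMap.ker (E + LinearMap.id) ↔ E x = -x := by
    intro x
    rw [LinearMap.mem_ker, LinearMap.add_apply, LinearMap.id_apply, add_eq_zero_iff_eq_neg]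
  have four_smul : ∀ v : L, (4:K) • v = v + v + v + v := by
    intro v
    rw [show (4:K) = (1:K)+1+1+1 by norm_num, add_smul, add_smul, add_smul, one_smul]
  refine ⟨⟨?_, ?_⟩, ⟨?_, ?_, ?_⟩, ⟨?_, ?_, ?_⟩⟩
  · rw [Submodule.disjoint_def]
    intro x hxp hxm
    rw [hmemP] at hxp; rw [hmemM] at hxm
    have hxx : x = -x := hxp.symm.trans hxm
    have hx2 : (2:K) • x = 0 := by
      rw [two_smul]
      nth_rewrite 2 [hxx]
      exact add_neg_cancel x
    exact (smul_eq_zero.mp hx2).resolve_left h2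
  · rw [codisjoint_iff, eq_top_iff]
    intro x _
    refine Submodule.mem_sup.mpr ⟨(2⁻¹:K) • (x + E x), ?_, (2⁻¹:K) • (x - E x), ?_, ?_⟩
    · rw [hmemP, map_smul, map_add, hsq]
      rw [add_comm (E x) x]
    · rw [hmemM, map_smul, map_sub, hsq, ← smul_neg, neg_sub]
    · rw [← smul_add]
      have : (x + E x) + (x - E x) = (2:K) • x := by
        rw [show (2:K) = (1:K)+1 by norm_num, add_smul, one_smul]; abel
      rw [this, smul_smul, inv_mul_cancel₀ h2, one_smul]
  · intro x hx
    rw [hmemP] at hx ⊢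
    rw [← ha, hx]
  · intro x hx
    rw [hmemP] at hx ⊢
    rw [← hb, hx]
  · intro x hx y hy z hz
    rw [hmemP] at hx hy hz ⊢
    have h := hint x y z
    rw [hx, hy, hz] at h
    rw [eq_sub_iff_add_eq, eq_sub_iff_add_eq, eq_sub_iff_add_eq] at h
    have h' : (4:K) • E (A.br x y z) = (4:K) • A.br x y z := by
      rw [four_smul (E (A.br x y z)), four_smul (A.br x y z)]
      exact h
    exact smul_right_injective L h4ne h'
  · intro x hx
    rw [hmemM] at hx ⊢
    rw [← ha, hx, map_neg]
  · intro x hx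
    rw [hmemM] at hx ⊢
    rw [← hb, hx, map_neg]
  · intro x hx y hy z hz
    rw [hmemM] at hx hy hz ⊢
    have h := hint x y z
    rw [hx, hy, hz] at h
    simp only [map_neg, LinearMap.neg_apply, neg_neg] at h
    rw [eq_sub_iff_add_eq, eq_sub_iff_add_eq, eq_sub_iff_add_eq] at h
    have h' : (4:K) • E (A.br x y z) = (4:K) • (- A.br x y z) := by
      rw [four_smul (E (A.br x y z)), four_smul (- A.br x y z)]
      exact h
    exact smul_right_injective L h4ne h'
end

section
/- Let (L, [·,·,·], α, β) be a 3-Bihom-Lie algebra with L = L₊ ⊕ L₋ as vector spaces, where L₊ and L₋ are Bihom subalgebras. Then the linear map E defined by E(x + y) = x − y for x ∈ L₊, y ∈ L₋ is a product structure on L. -/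
variable {K L : Type*} [Field K] [AddCommGroup L] [Module K L]

/-- If `L = L₊ ⊕ L₋` with both summands Bihom subalgebras, then `E(x+y) = x - y`
is a product structure. -/
theorem direct_sum_gives_product_structure (A : BihomLie3 K L)
    (Lp Lm : Submodule K L) (hc : IsCompl Lp Lm)
    (hp : IsBihomSub A Lp) (hm : IsBihomSub A Lm)
    (E : L →ₗ[K] L) (hEp : ∀ x ∈ Lp, E x = x) (hEm : ∀ y ∈ Lm, E y = -y) :
    IsProduct A E := by
  obtain ⟨haP, hbP, hbrP⟩ := hp
  obtain ⟨haM, hbM, hbrM⟩ := hm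
  have hdec : ∀ x : L, ∃ p ∈ Lp, ∃ m ∈ Lm, p + m = x := fun x =>
    by obtain ⟨p0, m0, hp0, hm0, h0⟩ := Submodule.codisjoint_iff_exists_add_eq.mp hc.codisjoint x
       exact ⟨p0, hp0, m0, hm0, h0⟩
  refine ⟨⟨?_, ?_, ?_⟩, ?_⟩
  · intro x
    obtain ⟨p, hpm, m, hmm, rfl⟩ := hdec x
    rw [map_add, hEp p hpm, hEm m hmm, map_add, hEp p hpm, map_neg, hEm m hmm, neg_neg]
  · intro x
    obtain ⟨p, hpm, m, hmm, rfl⟩ := hdec x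
    rw [map_add, hEp p hpm, hEm m hmm, map_add, map_add,
      map_neg, map_add, hEp _ (haP p hpm), hEm _ (haM m hmm)]
  · intro x
    obtain ⟨p, hpm, m, hmm, rfl⟩ := hdec x
    rw [map_add, hEp p hpm, hEm m hmm, map_add, map_add,
      map_neg, map_add, hEp _ (hbP p hpm), hEm _ (hbM m hmm)]
  · have key : ∀ x y z, (x ∈ Lp ∨ x ∈ Lm) → (y ∈ Lp ∨ y ∈ Lm) → (z ∈ Lp ∨ z ∈ Lm) →
        E (A.br x y z) =
          A.br (E x) (E y) (E z) + A.br (E x) y z + A.br x (E y) z + A.br x y (E z)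
          - E (A.br (E x) (E y) z) - E (A.br x (E y) (E z)) - E (A.br (E x) y (E z)) := by
      rintro x y z (hx | hx) (hy | hy) (hz | hz) <;>
      · first | rw [hEp x hx] | rw [hEm x hx]
        first | rw [hEp y hy] | rw [hEm y hy]
        first | rw [hEp z hz] | rw [hEm z hz]
        try simp only [map_neg, LinearMap.neg_apply, neg_neg]
        try rw [hEp _ (hbrP x hx y hy z hz)]
        try rw [hEm _ (hbrM x hx y hy z hz)]
        abel
    have hadd1 : ∀ x1 x2 y z,
        (E (A.br x1 y z) =
          A.br (E x1) (E y) (E z) + A.br (E x1) y z + A.br x1 (E y) z + A.br x1 y (E z)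
          - E (A.br (E x1) (E y) z) - E (A.br x1 (E y) (E z)) - E (A.br (E x1) y (E z))) →
        (E (A.br x2 y z) =
          A.br (E x2) (E y) (E z) + A.br (E x2) y z + A.br x2 (E y) z + A.br x2 y (E z)
          - E (A.br (E x2) (E y) z) - E (A.br x2 (E y) (E z)) - E (A.br (E x2) y (E z))) →
        E (A.br (x1 + x2) y z) =
          A.br (E (x1 + x2)) (E y) (E z) + A.br (E (x1 + x2)) y z + A.br (x1 + x2) (E y) z
          + A.br (x1 + x2) y (E z)
          - E (A.br (E (x1 + x2)) (E y) z) - E (A.br (x1 + x2) (E y) (E z))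
          - E (A.br (E (x1 + x2)) y (E z)) := by
      intro x1 x2 y z h1 h2
      simp only [map_add, LinearMap.add_apply] at *
      rw [h1, h2]; abel
    have hadd2 : ∀ x y1 y2 z,
        (E (A.br x y1 z) =
          A.br (E x) (E y1) (E z) + A.br (E x) y1 z + A.br x (E y1) z + A.br x y1 (E z)
          - E (A.br (E x) (E y1) z) - E (A.br x (E y1) (E z)) - E (A.br (E x) y1 (E z))) →
        (E (A.br x y2 z) =
          A.br (E x) (E y2) (E z) + A.br (E x) y2 z + A.br x (E y2) z + A.br x y2 (E z)
          - E (A.br (E x) (E y2) z) - E (A.br x (E y2) (E z)) - E (A.br (E x) y2 (E z))) →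
        E (A.br x (y1 + y2) z) =
          A.br (E x) (E (y1 + y2)) (E z) + A.br (E x) (y1 + y2) z + A.br x (E (y1 + y2)) z
          + A.br x (y1 + y2) (E z)
          - E (A.br (E x) (E (y1 + y2)) z) - E (A.br x (E (y1 + y2)) (E z))
          - E (A.br (E x) (y1 + y2) (E z)) := by
      intro x y1 y2 z h1 h2
      simp only [map_add, LinearMap.add_apply] at *
      rw [h1, h2]; abel
    have hadd3 : ∀ x y z1 z2,
        (E (A.br x y z1) =
          A.br (E x) (E y) (E z1) + A.br (E x) y z1 + A.br x (E y) z1 + A.br x y (E z1)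
          - E (A.br (E x) (E y) z1) - E (A.br x (E y) (E z1)) - E (A.br (E x) y (E z1))) →
        (E (A.br x y z2) =
          A.br (E x) (E y) (E z2) + A.br (E x) y z2 + A.br x (E y) z2 + A.br x y (E z2)
          - E (A.br (E x) (E y) z2) - E (A.br x (E y) (E z2)) - E (A.br (E x) y (E z2))) →
        E (A.br x y (z1 + z2)) =
          A.br (E x) (E y) (E (z1 + z2)) + A.br (E x) y (z1 + z2) + A.br x (E y) (z1 + z2)
          + A.br x y (E (z1 + z2))
          - E (A.br (E x) (E y) (z1 + z2)) - E (A.br x (E y) (E (z1 + z2)))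
          - E (A.br (E x) y (E (z1 + z2))) := by
      intro x y z1 z2 h1 h2
      simp only [map_add, LinearMap.add_apply] at *
      rw [h1, h2]; abel
    intro x y z
    obtain ⟨px, hpx, mx, hmx, rfl⟩ := hdec x
    obtain ⟨py, hpy, my, hmy, rfl⟩ := hdec y
    obtain ⟨pz, hpz, mz, hmz, rfl⟩ := hdec z
    apply hadd1 <;> apply hadd2 <;> apply hadd3 <;> apply key <;> tauto
end

section
/- Let (L, [·,·,·], α, β) be a 3-Bihom-Lie algebra and E an almost product structure on L (E² = Id, αE = Eα, βE = Eβ) satisfying E[x,y,z] = [Ex,y,z] for all x,y,z ∈ L. Then E is a product structure on L. -/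
variable {K L : Type*} [Field K] [AddCommGroup L] [Module K L]

/-- An almost product structure with `E[x,y,z] = [Ex,y,z]` is a product structure. -/
theorem strict_is_product (A : BihomLie3 K L) (E : L →ₗ[K] L)
    (hE : IsAlmostProduct A E)
    (hstrict : ∀ x y z, E (A.br x y z) = A.br (E x) y z) :
    IsProduct A E := by
  refine ⟨hE, fun x y z => ?_⟩
  rw [hstrict x y z, hstrict (E x) (E y) z, hstrict x (E y) (E z),
    hstrict (E x) y (E z), hE.1 x]
  abel
end

section
/- Let (L, [·,·,·], α, β) be a 3-Bihom-Lie algebra with α and β surjective, and let E be a strict product structure on L (an almost product structure with E[x,y,z] = [Ex,y,z] for all x,y,z). Then for the eigenspaces L₊ and L₋ of E, one has [L₊, L₊, L₋] = 0 and [L₋, L₋, L₊] = 0. -/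
variable {K L : Type*} [Field K] [AddCommGroup L] [Module K L]

/-- For a strict product structure (with `α`, `β` surjective), the eigenspaces satisfy
`[L₊,L₊,L₋] = 0` and `[L₋,L₋,L₊] = 0`. -/
theorem strict_product_brackets_vanish (A : BihomLie3 K L) (h2 : (2 : K) ≠ 0)
    (ha : Function.Surjective A.a) (hb : Function.Surjective A.b)
    (E : L →ₗ[K] L) (hE : IsAlmostProduct A E)
    (hstrict : ∀ x y z, E (A.br x y z) = A.br (E x) y z) :
    (∀ x y z, E x = x → E y = y → E z = -z → A.br x y z = 0) ∧
    (∀ x y z, E x = -x → E y = -y → E z = z → A.br x y z = 0) := by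
  obtain ⟨hE2, hEa, hEb⟩ := hE
  have slot2 : ∀ x y z, E (A.br x y z) = A.br x (E y) z := by
    intro u v w
    obtain ⟨x, rfl⟩ := hb u
    obtain ⟨y, rfl⟩ := hb v
    obtain ⟨z, rfl⟩ := ha w
    rw [A.skew1 x y z, map_neg, hstrict, ← hEb, A.skew1 (E y) x z, neg_neg]
  have slot3 : ∀ x y z, E (A.br x y z) = A.br x y (E z) := by
    intro u v w
    obtain ⟨x, rfl⟩ := hb u
    obtain ⟨y, rfl⟩ := hb v
    obtain ⟨z, rfl⟩ := ha w
    rw [A.skew2 x y z, map_neg, slot2, ← hEb, A.skew2 x (E z) y, neg_neg, ← hEa]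
  refine ⟨?_, ?_⟩ <;> intro x y z hx hy hz
  · have h1 : E (A.br x y z) = A.br x y z := by rw [hstrict, hx]
    have h3 : E (A.br x y z) = - A.br x y z := by rw [slot3, hz, map_neg]
    have hbb : A.br x y z = - A.br x y z := h1.symm.trans h3
    have h0 : (2 : K) • A.br x y z = 0 := by
      rw [two_smul]; nth_rewrite 2 [hbb]; abel
    exact (smul_eq_zero.mp h0).resolve_left h2
  · have h1 : E (A.br x y z) = - A.br x y z := by rw [hstrict, hx]; simp
    have h3 : E (A.br x y z) = A.br x y z := by rw [slot3, hz]
    have hbb : A.br x y z = - A.br x y z := h3.symm.trans h1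
    have h0 : (2 : K) • A.br x y z = 0 := by
      rw [two_smul]; nth_rewrite 2 [hbb]; abel
    exact (smul_eq_zero.mp h0).resolve_left h2
end

section
/- Let (L, [·,·,·], α, β) be a 3-Bihom-Lie algebra with α, β surjective, and suppose L = L₊ ⊕ L₋ where L₊, L₋ are Bihom subalgebras with [L₊,L₊,L₋] = 0 and [L₋,L₋,L₊] = 0. Then the map E(x+y) = x − y (x ∈ L₊, y ∈ L₋) is a strict product structure on L, i.e., E² = Id, E commutes with α and β, and E[u,v,w] = [Eu,v,w] for all u,v,w ∈ L. -/
variable {K L : Type*} [Field K] [AddCommGroup L] [Module K L]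

/-- Converse: a decomposition into Bihom subalgebras with the mixed brackets
vanishing gives a strict product structure. -/
theorem direct_sum_gives_strict_product (A : BihomLie3 K L)
    (ha : Function.Surjective A.a) (hb : Function.Surjective A.b)
    (Lp Lm : Submodule K L) (hc : IsCompl Lp Lm)
    (hp : IsBihomSub A Lp) (hm : IsBihomSub A Lm)
    (hppm : ∀ x ∈ Lp, ∀ y ∈ Lp, ∀ z ∈ Lm, A.br x y z = 0)
    (hmmp : ∀ x ∈ Lm, ∀ y ∈ Lm, ∀ z ∈ Lp, A.br x y z = 0)
    (E : L →ₗ[K] L) (hEp : ∀ x ∈ Lp, E x = x) (hEm : ∀ y ∈ Lm, E y = -y) :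
    IsAlmostProduct A E ∧ ∀ u v w, E (A.br u v w) = A.br (E u) v w := by
  obtain ⟨hpa, hpb, hpbr⟩ := hp
  obtain ⟨hma, hmb, hmbr⟩ := hm
  -- decomposition
  have hdec : ∀ x : L, ∃ p ∈ Lp, ∃ m ∈ Lm, p + m = x := by
    intro x
    have hx : x ∈ Lp ⊔ Lm := by rw [hc.sup_eq_top]; trivial
    exact Submodule.mem_sup.mp hx
  have hdisj : ∀ x ∈ Lp, x ∈ Lm → x = 0 := by
    intro x h1 h2
    have := hc.inf_eq_bot
    have : x ∈ Lp ⊓ Lm := ⟨h1, h2⟩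
    rwa [hc.inf_eq_bot, Submodule.mem_bot] at this
  -- surjectivity restricted to subspaces
  have key : ∀ (f : L →ₗ[K] L), Function.Surjective f →
      (∀ x ∈ Lp, f x ∈ Lp) → (∀ x ∈ Lm, f x ∈ Lm) →
      (∀ x ∈ Lp, ∃ y ∈ Lp, f y = x) ∧ (∀ x ∈ Lm, ∃ y ∈ Lm, f y = x) := by
    intro f hf hfp hfm
    constructor
    · intro x hx
      obtain ⟨y, hy⟩ := hf x
      obtain ⟨p, hpm, m, hmm, hpm2⟩ := hdec y
      refine ⟨p, hpm, ?_⟩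
      have h1 : f p + f m = x := by rw [← map_add, hpm2, hy]
      have h2 : f m ∈ Lm := hfm m hmm
      have h3 : f m ∈ Lp := by
        have : f m = x - f p := by rw [← h1]; abel
        rw [this]; exact Submodule.sub_mem _ hx (hfp p hpm)
      have := hdisj _ h3 h2
      rw [← h1, this, add_zero]
    · intro x hx
      obtain ⟨y, hy⟩ := hf x
      obtain ⟨p, hpm, m, hmm, hpm2⟩ := hdec y
      refine ⟨m, hmm, ?_⟩
      have h1 : f p + f m = x := by rw [← map_add, hpm2, hy]
      have h2 : f p ∈ Lp := hfp p hpm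
      have h3 : f p ∈ Lm := by
        have : f p = x - f m := by rw [← h1]; abel
        rw [this]; exact Submodule.sub_mem _ hx (hfm m hmm)
      have := hdisj _ h2 h3
      rw [← h1, this, zero_add]
  obtain ⟨hbp, hbm⟩ := key A.b hb hpb hmb
  obtain ⟨hap, ham⟩ := key A.a ha hpa hma
  -- mixed vanishing lemmas
  have hpmp : ∀ x ∈ Lp, ∀ y ∈ Lm, ∀ z ∈ Lp, A.br x y z = 0 := by
    intro x hx y hy z hz
    obtain ⟨x', hx', rfl⟩ := hbp x hx
    obtain ⟨y', hy', rfl⟩ := hbm y hy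
    obtain ⟨z', hz', rfl⟩ := hap z hz
    rw [A.skew2 x' y' z', hppm _ (hpb x' hx') _ (hpb z' hz') _ (hma y' hy'), neg_zero]
  have hmpm : ∀ x ∈ Lm, ∀ y ∈ Lp, ∀ z ∈ Lm, A.br x y z = 0 := by
    intro x hx y hy z hz
    obtain ⟨x', hx', rfl⟩ := hbm x hx
    obtain ⟨y', hy', rfl⟩ := hbp y hy
    obtain ⟨z', hz', rfl⟩ := ham z hz
    rw [A.skew2 x' y' z', hmmp _ (hmb x' hx') _ (hmb z' hz') _ (hpa y' hy'), neg_zero]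
  have hpmm : ∀ x ∈ Lp, ∀ y ∈ Lm, ∀ z ∈ Lm, A.br x y z = 0 := by
    intro x hx y hy z hz
    obtain ⟨x', hx', rfl⟩ := hbp x hx
    obtain ⟨y', hy', rfl⟩ := hbm y hy
    obtain ⟨z', hz', rfl⟩ := ham z hz
    rw [A.skew1 x' y' z', hmpm _ (hmb y' hy') _ (hpb x' hx') _ (hma z' hz'), neg_zero]
  have hmpp : ∀ x ∈ Lm, ∀ y ∈ Lp, ∀ z ∈ Lp, A.br x y z = 0 := by
    intro x hx y hy z hz
    obtain ⟨x', hx', rfl⟩ := hbm x hx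
    obtain ⟨y', hy', rfl⟩ := hbp y hy
    obtain ⟨z', hz', rfl⟩ := hap z hz
    rw [A.skew1 x' y' z', hpmp _ (hpb y' hy') _ (hmb x' hx') _ (hpa z' hz'), neg_zero]
  refine ⟨⟨?_, ?_, ?_⟩, ?_⟩
  · intro x
    obtain ⟨p, hpm, m, hmm, rfl⟩ := hdec x
    rw [map_add, hEp p hpm, hEm m hmm, map_add, hEp p hpm, map_neg, hEm m hmm, neg_neg]
  · intro x
    obtain ⟨p, hpm, m, hmm, rfl⟩ := hdec x
    rw [map_add, hEp p hpm, hEm m hmm, map_add, map_add, map_neg, map_add E,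
      hEp _ (hpa p hpm), hEm _ (hma m hmm)]
  · intro x
    obtain ⟨p, hpm, m, hmm, rfl⟩ := hdec x
    rw [map_add, hEp p hpm, hEm m hmm, map_add, map_add, map_neg, map_add E,
      hEp _ (hpb p hpm), hEm _ (hmb m hmm)]
  · intro u v w
    obtain ⟨up, hup, um, hum, rfl⟩ := hdec u
    obtain ⟨vp, hvp, vm, hvm, rfl⟩ := hdec v
    obtain ⟨wp, hwp, wm, hwm, rfl⟩ := hdec w
    have e1 : A.br up vp wm = 0 := hppm _ hup _ hvp _ hwm
    have e2 : A.br um vm wp = 0 := hmmp _ hum _ hvm _ hwp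
    have e3 : A.br up vm wp = 0 := hpmp _ hup _ hvm _ hwp
    have e4 : A.br up vm wm = 0 := hpmm _ hup _ hvm _ hwm
    have e5 : A.br um vp wp = 0 := hmpp _ hum _ hvp _ hwp
    have e6 : A.br um vp wm = 0 := hmpm _ hum _ hvp _ hwm
    have eppp : A.br up vp wp ∈ Lp := hpbr _ hup _ hvp _ hwp
    have emmm : A.br um vm wm ∈ Lm := hmbr _ hum _ hvm _ hwm
    simp only [map_add, map_neg, LinearMap.add_apply, LinearMap.neg_apply,
      LinearMap.sub_apply, e1, e2, e3, e4, e5, e6, add_zero, zero_add,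
      hEp _ eppp, hEm _ emmm, hEp up hup, hEm um hum]
    simp only [map_add, map_neg, LinearMap.add_apply, LinearMap.neg_apply,
      e1, e2, e3, e4, e5, e6, neg_zero]
    abel
end

section
/- Let E be an almost product structure on a 3-Bihom-Lie algebra (L, [·,·,·], α, β) satisfying [x,y,z] = −[x,Ey,Ez] − [Ex,y,Ez] − [Ex,Ey,z] for all x,y,z ∈ L. Then E is a product structure on L. -/
variable {K L : Type*} [Field K] [AddCommGroup L] [Module K L]

/-- An almost product structure satisfying the abelian identity is a product structure. -/
theorem abelian_is_product (A : BihomLie3 K L) (E : L →ₗ[K] L)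
    (hE : IsAlmostProduct A E)
    (hab : ∀ x y z, A.br x y z =
      - A.br x (E y) (E z) - A.br (E x) y (E z) - A.br (E x) (E y) z) :
    IsProduct A E := by
  refine ⟨hE, fun x y z => ?_⟩
  obtain ⟨h2, -, -⟩ := hE
  have h1 := hab (E x) (E y) (E z)
  rw [h2 x, h2 y, h2 z] at h1
  have h4 : E (A.br x y z) =
      E (- A.br x (E y) (E z) - A.br (E x) y (E z) - A.br (E x) (E y) z) :=
    congrArg E (hab x y z)
  simp only [map_neg, map_sub] at h4
  rw [h1, h4]; abel
end

section
/- Let (L, [·,·,·], α, β) be a 3-Bihom-Lie algebra with L = L₊ ⊕ L₋ where L₊ and L₋ are abelian Bihom subalgebras. Then E(x+y) = x − y (x ∈ L₊, y ∈ L₋) is an abelian product structure on L, i.e., [u,v,w] = −[u,Ev,Ew] − [Eu,v,Ew] − [Eu,Ev,w] for all u,v,w ∈ L. -/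
variable {K L : Type*} [Field K] [AddCommGroup L] [Module K L]

/-- A decomposition into abelian Bihom subalgebras gives an abelian product structure. -/
theorem direct_sum_abelian_gives_abelian_product (A : BihomLie3 K L)
    (Lp Lm : Submodule K L) (hc : IsCompl Lp Lm)
    (hp : IsBihomSub A Lp) (hm : IsBihomSub A Lm)
    (hpab : ∀ x ∈ Lp, ∀ y ∈ Lp, ∀ z ∈ Lp, A.br x y z = 0)
    (hmab : ∀ x ∈ Lm, ∀ y ∈ Lm, ∀ z ∈ Lm, A.br x y z = 0)
    (E : L →ₗ[K] L) (hEp : ∀ x ∈ Lp, E x = x) (hEm : ∀ y ∈ Lm, E y = -y) :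
    IsAlmostProduct A E ∧
    ∀ u v w, A.br u v w =
      - A.br u (E v) (E w) - A.br (E u) v (E w) - A.br (E u) (E v) w := by
  have hdec : ∀ x : L, ∃ p ∈ Lp, ∃ m ∈ Lm, x = p + m := by
    intro x
    have hx : x ∈ Lp ⊔ Lm := by rw [hc.sup_eq_top]; trivial
    rcases Submodule.mem_sup.1 hx with ⟨p, hp', m, hm', h⟩
    exact ⟨p, hp', m, hm', h.symm⟩
  have hE : ∀ p ∈ Lp, ∀ m ∈ Lm, E (p + m) = p - m := by
    intro p hp' m hm'
    rw [map_add, hEp p hp', hEm m hm', sub_eq_add_neg]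
  constructor
  · refine ⟨?_, ?_, ?_⟩
    · intro x
      obtain ⟨p, hp', m, hm', rfl⟩ := hdec x
      rw [hE p hp' m hm', map_sub, hEp p hp', hEm m hm', sub_neg_eq_add]
    · intro x
      obtain ⟨p, hp', m, hm', rfl⟩ := hdec x
      rw [hE p hp' m hm', map_sub, map_add, map_add,
        hEp _ (hp.1 p hp'), hEm _ (hm.1 m hm'), sub_eq_add_neg]
    · intro x
      obtain ⟨p, hp', m, hm', rfl⟩ := hdec x
      rw [hE p hp' m hm', map_sub, map_add, map_add,
        hEp _ (hp.2.1 p hp'), hEm _ (hm.2.1 m hm'), sub_eq_add_neg]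
  · intro u v w
    obtain ⟨p, hp', m, hm', rfl⟩ := hdec u
    obtain ⟨q, hq', n, hn', rfl⟩ := hdec v
    obtain ⟨r, hr', s, hs', rfl⟩ := hdec w
    rw [hE p hp' m hm', hE q hq' n hn', hE r hr' s hs']
    have h1 := hpab p hp' q hq' r hr'
    have h2 := hmab m hm' n hn' s hs'
    simp only [map_add, map_sub, LinearMap.add_apply, LinearMap.sub_apply, h1, h2]
    abel
end

section
/- Let E be an almost product structure on a 3-Bihom-Lie algebra (L, [·,·,·], α, β) satisfying [x,y,z] = E[Ex,y,z] + E[x,Ey,z] + E[x,y,Ez] for all x,y,z ∈ L (a strong abelian product structure). Then E is a product structure, the eigenspaces L₊ and L₋ are abelian ([L₊,L₊,L₊] = 0 = [L₋,L₋,L₋]), and moreover [L₊,L₊,L₋] ⊆ L₊ and [L₋,L₋,L₊] ⊆ L₋ (assume characteristic zero). -/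
variable {K L : Type*} [Field K] [AddCommGroup L] [Module K L]

/-- A strong abelian product structure is an (abelian) product structure whose
eigenspaces are abelian and satisfy `[L₊,L₊,L₋] ⊆ L₊`, `[L₋,L₋,L₊] ⊆ L₋`. -/
theorem strong_abelian_product_properties [CharZero K] (A : BihomLie3 K L)
    (E : L →ₗ[K] L) (hE : IsAlmostProduct A E)
    (hstrong : ∀ x y z, A.br x y z =
      E (A.br (E x) y z) + E (A.br x (E y) z) + E (A.br x y (E z))) :
    IsProductEq A E ∧
    (∀ x y z, E x = x → E y = y → E z = z → A.br x y z = 0) ∧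
    (∀ x y z, E x = -x → E y = -y → E z = -z → A.br x y z = 0) ∧
    (∀ x y z, E x = x → E y = y → E z = -z → E (A.br x y z) = A.br x y z) ∧
    (∀ x y z, E x = -x → E y = -y → E z = z → E (A.br x y z) = - A.br x y z) := by
  obtain ⟨hE2, -, -⟩ := hE
  have cancel : ∀ (n : ℕ), (n : K) ≠ 0 → ∀ v : L, (n : K) • v = 0 → v = 0 := by
    intro n hn v hv
    rcases smul_eq_zero.mp hv with h | h
    · exact absurd h hn
    · exact h
  have Kk : ∀ x y z, E (A.br x y z) =
      A.br (E x) y z + A.br x (E y) z + A.br x y (E z) := by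
    intro x y z
    rw [hstrong x y z]
    simp [hE2]
  have T : ∀ x y z, A.br (E x) (E y) z + A.br (E x) y (E z) + A.br x (E y) (E z)
      = - A.br x y z := by
    intro x y z
    have h := hstrong x y z
    rw [Kk (E x) y z, Kk x (E y) z, Kk x y (E z)] at h
    simp only [hE2] at h
    have h2 : (2 : K) • (A.br (E x) (E y) z + A.br (E x) y (E z) + A.br x (E y) (E z)
        + A.br x y z) = 0 := by
      linear_combination (norm := module) -h
    have := cancel 2 (by norm_num) _ (by exact_mod_cast h2)
    linear_combination (norm := module) this
  have N : ∀ x y z, A.br (E x) (E y) (E z) = - E (A.br x y z) := by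
    intro x y z
    have t1 := T (E x) y z
    have t2 := T x (E y) z
    have t3 := T x y (E z)
    simp only [hE2] at t1 t2 t3
    have hK := Kk x y z
    have h3 : (3 : K) • (A.br (E x) (E y) (E z) + E (A.br x y z)) = 0 := by
      linear_combination (norm := module) t1 + t2 + t3 + 3 • hK
    have := cancel 3 (by norm_num) _ (by exact_mod_cast h3)
    linear_combination (norm := module) this
  refine ⟨?_, ?_, ?_, ?_, ?_⟩
  · intro x y z
    have hK := Kk x y z
    have h1 := Kk (E x) (E y) z
    have h2 := Kk x (E y) (E z)
    have h3 := Kk (E x) y (E z)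
    simp only [hE2] at h1 h2 h3
    have hN := N x y z
    linear_combination (norm := module) -hK + h1 + h2 + h3 + 2 • hN
  · intro x y z hx hy hz
    have hK := Kk x y z
    rw [hx, hy, hz] at hK
    have hN := N x y z
    rw [hx, hy, hz] at hN
    have h4 : (4 : K) • A.br x y z = 0 := by
      linear_combination (norm := module) hN - hK
    exact cancel 4 (by norm_num) _ (by exact_mod_cast h4)
  · intro x y z hx hy hz
    have hK := Kk x y z
    rw [hx, hy, hz] at hK
    simp only [map_neg, LinearMap.neg_apply] at hK
    have hN := N x y z
    rw [hx, hy, hz] at hN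
    simp only [map_neg, LinearMap.neg_apply] at hN
    have h4 : (4 : K) • A.br x y z = 0 := by
      linear_combination (norm := module) hK - hN
    exact cancel 4 (by norm_num) _ (by exact_mod_cast h4)
  · intro x y z hx hy hz
    have hK := Kk x y z
    rw [hx, hy, hz] at hK
    simp only [map_neg, LinearMap.neg_apply] at hK
    linear_combination (norm := module) hK
  · intro x y z hx hy hz
    have hK := Kk x y z
    rw [hx, hy, hz] at hK
    simp only [map_neg, LinearMap.neg_apply] at hK
    linear_combination (norm := module) hK
end

section
/- Let E be an almost product structure on a 3-Bihom-Lie algebra (L, [·,·,·], α, β) satisfying E[x,y,z] = [Ex,Ey,Ez] for all x,y,z ∈ L (a perfect product structure). Then E is a product structure on L, and the eigenspaces satisfy [L₊,L₊,L₋] ⊆ L₋ and [L₋,L₋,L₊] ⊆ L₊. -/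
variable {K L : Type*} [Field K] [AddCommGroup L] [Module K L]

/-- A perfect product structure (`E[x,y,z] = [Ex,Ey,Ez]`) is a product structure with
`[L₊,L₊,L₋] ⊆ L₋` and `[L₋,L₋,L₊] ⊆ L₊`. -/
theorem perfect_product_properties (A : BihomLie3 K L)
    (E : L →ₗ[K] L) (hE : IsAlmostProduct A E)
    (hperf : ∀ x y z, E (A.br x y z) = A.br (E x) (E y) (E z)) :
    IsProductEq A E ∧
    (∀ x y z, E x = x → E y = y → E z = -z → E (A.br x y z) = - A.br x y z) ∧
    (∀ x y z, E x = -x → E y = -y → E z = z → E (A.br x y z) = A.br x y z) := by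
  obtain ⟨h2, _, _⟩ := hE
  refine ⟨fun x y z => ?_, fun x y z hx hy hz => ?_, fun x y z hx hy hz => ?_⟩
  · simp only [hperf, h2]; abel
  · rw [hperf, hx, hy, hz, map_neg]
  · rw [hperf, hx, hy, hz]; simp
end

section
/- Let J be an almost complex structure on a real 3-Bihom-Lie algebra (L, [·,·,·], α, β) satisfying J[x,y,z] = [Jx,y,z] for all x,y,z ∈ L. Then J is a complex structure on L, i.e., J[x,y,z] = −[Jx,Jy,Jz] + [Jx,y,z] + [x,Jy,z] + [x,y,Jz] + J[Jx,Jy,z] + J[x,Jy,Jz] + J[Jx,y,Jz]. -/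
variable {K L : Type*} [Field K] [AddCommGroup L] [Module K L]

variable {V : Type*} [AddCommGroup V] [Module ℝ V]

/-- An almost complex structure with `J[x,y,z] = [Jx,y,z]` is a complex structure. -/
theorem strict_is_complex (A : BihomLie3 ℝ V) (J : V →ₗ[ℝ] V)
    (hJ : IsAlmostComplex A J)
    (hstrict : ∀ x y z, J (A.br x y z) = A.br (J x) y z) :
    IsComplex A J := by
  refine ⟨hJ, fun x y z => ?_⟩
  simp only [hstrict, hJ.1, map_neg, LinearMap.neg_apply]
  abel
end

section
/- Let J be an almost complex structure on a real 3-Bihom-Lie algebra satisfying [x,y,z] = [x,Jy,Jz] + [Jx,y,Jz] + [Jx,Jy,z] for all x,y,z ∈ L. Then J is a complex structure on L. -/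
variable {K L : Type*} [Field K] [AddCommGroup L] [Module K L]

variable {V : Type*} [AddCommGroup V] [Module ℝ V]

/-- An almost complex structure satisfying the abelian identity is a complex structure. -/
theorem abelian_is_complex (A : BihomLie3 ℝ V) (J : V →ₗ[ℝ] V)
    (hJ : IsAlmostComplex A J)
    (hab : ∀ x y z, A.br x y z =
      A.br x (J y) (J z) + A.br (J x) y (J z) + A.br (J x) (J y) z) :
    IsComplex A J := by
  refine ⟨hJ, fun x y z => ?_⟩
  have hJ2 := hJ.1
  have h0 : J (A.br x y z) =
      J (A.br x (J y) (J z)) + J (A.br (J x) y (J z)) + J (A.br (J x) (J y) z) := by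
    rw [hab x y z]; simp [map_add]
  have h1 := hab (J x) y z
  rw [hJ2 x] at h1
  simp only [map_neg, LinearMap.neg_apply] at h1
  rw [h0, h1]
  abel
end

section
/- Let J be an almost complex structure on a real 3-Bihom-Lie algebra satisfying [x,y,z] = −J[Jx,y,z] − J[x,Jy,z] − J[x,y,Jz] for all x,y,z ∈ L. Then J is a complex structure on L. -/
variable {K L : Type*} [Field K] [AddCommGroup L] [Module K L]

variable {V : Type*} [AddCommGroup V] [Module ℝ V]

/-- An almost complex structure satisfying the strong abelian identity is a complex
structure. -/
theorem strong_abelian_is_complex (A : BihomLie3 ℝ V) (J : V →ₗ[ℝ] V)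
    (hJ : IsAlmostComplex A J)
    (hstrong : ∀ x y z, A.br x y z =
      - J (A.br (J x) y z) - J (A.br x (J y) z) - J (A.br x y (J z))) :
    IsComplex A J := by
  obtain ⟨hJJ, hJa, hJb⟩ := hJ
  refine ⟨⟨hJJ, hJa, hJb⟩, ?_⟩
  have key : ∀ x y z, J (A.br x y z) =
      A.br (J x) y z + A.br x (J y) z + A.br x y (J z) := by
    intro x y z
    have h := congrArg J (hstrong x y z)
    simpa [map_sub, map_neg, hJJ] using h
  intro x y z
  have hQ1 : J (A.br x (J y) (J z)) =
      A.br (J x) (J y) (J z) - A.br x y (J z) - A.br x (J y) z := by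
    have h := key x (J y) (J z)
    simp only [hJJ, map_neg, LinearMap.neg_apply] at h
    rw [h]; abel
  have hQ2 : J (A.br (J x) y (J z)) =
      A.br (J x) (J y) (J z) - A.br x y (J z) - A.br (J x) y z := by
    have h := key (J x) y (J z)
    simp only [hJJ, map_neg, LinearMap.neg_apply] at h
    rw [h]; abel
  have hQ3 : J (A.br (J x) (J y) z) =
      A.br (J x) (J y) (J z) - A.br x (J y) z - A.br (J x) y z := by
    have h := key (J x) (J y) z
    simp only [hJJ, map_neg, LinearMap.neg_apply] at h
    rw [h]; abel
  have hxyz : A.br (J x) (J y) (J z) =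
      J (A.br x (J y) (J z)) + J (A.br (J x) y (J z)) + J (A.br (J x) (J y) z) := by
    have h := hstrong (J x) (J y) (J z)
    simp only [hJJ, map_neg, LinearMap.neg_apply, neg_neg, sub_neg_eq_add] at h
    rw [h]
  have hP : A.br (J x) (J y) (J z) =
      A.br (J x) y z + A.br x (J y) z + A.br x y (J z) := by
    have h0 : A.br (J x) (J y) (J z)
        - ((A.br (J x) (J y) (J z) - A.br x y (J z) - A.br x (J y) z)
         + (A.br (J x) (J y) (J z) - A.br x y (J z) - A.br (J x) y z)
         + (A.br (J x) (J y) (J z) - A.br x (J y) z - A.br (J x) y z)) = 0 := by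
      rw [← hQ1, ← hQ2, ← hQ3, ← hxyz]
      abel
    have h2 : (2:ℝ) • A.br (J x) (J y) (J z) =
        (2:ℝ) • (A.br (J x) y z + A.br x (J y) z + A.br x y (J z)) := by
      have h1 : (2:ℝ) • (A.br (J x) y z + A.br x (J y) z + A.br x y (J z))
          - (2:ℝ) • A.br (J x) (J y) (J z) = 0 := by
        rw [← h0, two_smul, two_smul]; abel
      exact (eq_of_sub_eq_zero h1).symm
    exact smul_right_injective V (by norm_num : (2:ℝ) ≠ 0) h2
  rw [key x y z, hQ1, hQ2, hQ3, hP]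
  abel
end

section
/- Let J be an almost complex structure on a real 3-Bihom-Lie algebra satisfying J[x,y,z] = −[Jx,Jy,Jz] for all x,y,z ∈ L. Then J is a complex structure on L. -/
variable {K L : Type*} [Field K] [AddCommGroup L] [Module K L]

variable {V : Type*} [AddCommGroup V] [Module ℝ V]

/-- An almost complex structure with `J[x,y,z] = -[Jx,Jy,Jz]` is a complex structure. -/
theorem perfect_is_complex (A : BihomLie3 ℝ V) (J : V →ₗ[ℝ] V)
    (hJ : IsAlmostComplex A J)
    (hperf : ∀ x y z, J (A.br x y z) = - A.br (J x) (J y) (J z)) :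
    IsComplex A J := by
  refine ⟨hJ, fun x y z => ?_⟩
  have h2 := hJ.1
  simp only [hperf, h2, map_neg, LinearMap.neg_apply, neg_neg]
  abel
end

section
/- Let J be a complex structure on a real 3-Bihom-Lie algebra (L, [·,·,·], α, β), and define [x,y,z]_J := (1/4)([x,y,z] − [x,Jy,Jz] − [Jx,y,Jz] − [Jx,Jy,z]). Then J is a strict complex structure on (L, [·,·,·]_J, α, β), i.e., J[x,y,z]_J = [Jx,y,z]_J for all x,y,z ∈ L. -/
variable {K L : Type*} [Field K] [AddCommGroup L] [Module K L]

variable {V : Type*} [AddCommGroup V] [Module ℝ V]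

/-- The modified bracket `[x,y,z]_J`. -/
noncomputable def brJ (A : BihomLie3 ℝ V) (J : V →ₗ[ℝ] V) (x y z : V) : V :=
  (1 / 4 : ℝ) • (A.br x y z - A.br x (J y) (J z) - A.br (J x) y (J z) - A.br (J x) (J y) z)

/-- A complex structure `J` is a strict complex structure for the modified bracket. -/
theorem complex_strict_for_brJ (A : BihomLie3 ℝ V) (J : V →ₗ[ℝ] V)
    (hJ : IsComplex A J) :
    ∀ x y z, J (brJ A J x y z) = brJ A J (J x) y z := by
  obtain ⟨⟨hJ2, _, _⟩, hint⟩ := hJ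
  intro x y z
  have h := hint x y z
  simp only [brJ, map_smul, map_sub, hJ2, map_neg, LinearMap.neg_apply]
  linear_combination (norm := module) (1/4 : ℝ) • h
end

section
/- Let (L, [·,·,·], α, β) be a real 3-Bihom-Lie algebra with α, β surjective, and let J be a complex structure on L. Then J is a strict complex structure (J[x,y,z] = [Jx,y,z] for all x,y,z) if and only if [x,y,z]_J = [x,y,z] for all x,y,z, where [x,y,z]_J := (1/4)([x,y,z] − [x,Jy,Jz] − [Jx,y,Jz] − [Jx,Jy,z]). -/
variable {K L : Type*} [Field K] [AddCommGroup L] [Module K L]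

variable {V : Type*} [AddCommGroup V] [Module ℝ V]

/-- With `α`, `β` surjective, a complex structure `J` is strict iff `[·,·,·]_J = [·,·,·]`. -/
theorem strict_iff_brJ_eq (A : BihomLie3 ℝ V)
    (ha : Function.Surjective A.a) (hb : Function.Surjective A.b)
    (J : V →ₗ[ℝ] V) (hJ : IsComplex A J) :
    (∀ x y z, J (A.br x y z) = A.br (J x) y z) ↔
    (∀ x y z, brJ A J x y z = A.br x y z) := by
  obtain ⟨⟨hJ2, hJa, hJb⟩, hint⟩ := hJ
  constructor
  · -- strictness implies [·,·,·]_J = [·,·,·]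
    intro hstr
    -- slot-2 strictness
    have slot2 : ∀ x y z, J (A.br x y z) = A.br x (J y) z := by
      intro x y z
      obtain ⟨x', rfl⟩ := hb x
      obtain ⟨y', rfl⟩ := hb y
      obtain ⟨z', rfl⟩ := ha z
      rw [A.skew1 x' y' z', map_neg, hstr, ← hJb, A.skew1 (J y') x' z', neg_neg]
    -- slot-3 strictness
    have slot3 : ∀ x y z, J (A.br x y z) = A.br x y (J z) := by
      intro x y z
      obtain ⟨x', rfl⟩ := hb x
      obtain ⟨y', rfl⟩ := hb y
      obtain ⟨z', rfl⟩ := ha z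
      rw [A.skew2 x' y' z', map_neg, slot2, ← hJb, A.skew2 x' (J z') y', neg_neg, hJa]
    intro x y z
    have hp : A.br x (J y) (J z) = - A.br x y z := by
      rw [← slot3 x (J y) z, ← slot2 x y z, hJ2]
    have hq : A.br (J x) y (J z) = - A.br x y z := by
      rw [← slot3 (J x) y z, ← hstr x y z, hJ2]
    have hr : A.br (J x) (J y) z = - A.br x y z := by
      rw [← slot2 (J x) y z, ← hstr x y z, hJ2]
    rw [brJ, hp, hq, hr]
    module
  · -- [·,·,·]_J = [·,·,·] implies strictness
    intro heq
    have hS : ∀ x y z, A.br x (J y) (J z) + A.br (J x) y (J z) + A.br (J x) (J y) z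
        = (-3 : ℝ) • A.br x y z := by
      intro x y z
      have h := heq x y z
      rw [brJ] at h
      linear_combination (norm := module) (-4 : ℝ) • h
    have hneg1 : ∀ x y z, A.br (J (J x)) y z = - A.br x y z := by
      intro x y z; rw [hJ2]; simp [map_neg]
    have hneg2 : ∀ x y z, A.br x (J (J y)) z = - A.br x y z := by
      intro x y z; rw [hJ2]; simp [map_neg]
    have hneg3 : ∀ x y z, A.br x y (J (J z)) = - A.br x y z := by
      intro x y z; rw [hJ2]; simp [map_neg]
    intro x y z
    -- instantiations of hS
    have h1 := hS (J x) y z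
    have h2 := hS x (J y) z
    have h3 := hS x y (J z)
    rw [hneg1, hneg1] at h1
    rw [hneg2, hneg2] at h2
    rw [hneg3, hneg3] at h3
    -- equality of the three single-J brackets
    have c12 : A.br (J x) y z = A.br x (J y) z := by
      linear_combination (norm := module) (1/4 : ℝ) • h1 - (1/4 : ℝ) • h2
    have c13 : A.br (J x) y z = A.br x y (J z) := by
      linear_combination (norm := module) (1/4 : ℝ) • h1 - (1/4 : ℝ) • h3
    have cD : A.br (J x) (J y) (J z) = - A.br (J x) y z := by
      linear_combination (norm := module) h1 - c12 - c13
    -- the complex structure equation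
    have hc := hint x y z
    have hJS : J (A.br (J x) (J y) z) + J (A.br x (J y) (J z)) + J (A.br (J x) y (J z))
        = (-3 : ℝ) • J (A.br x y z) := by
      rw [← map_add, ← map_add, ← map_smul]
      congr 1
      linear_combination (norm := module) hS x y z
    linear_combination (norm := module) (1/4 : ℝ) • hc + (1/4 : ℝ) • hJS
      - (1/4 : ℝ) • cD - (1/4 : ℝ) • c12 - (1/4 : ℝ) • c13
end

section
/- Let (L, [·,·,·], α, β) be a complex 3-Bihom-Lie algebra. A linear map E : L → L is a product structure on L if and only if J = iE is a complex structure on L. -/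
variable {K L : Type*} [Field K] [AddCommGroup L] [Module K L]

variable {W : Type*} [AddCommGroup W] [Module ℂ W]

/-- On a complex 3-Bihom-Lie algebra, `E` is a product structure iff `J = iE` is a
complex structure. -/
theorem product_iff_iE_complex (A : BihomLie3 ℂ W) (E : W →ₗ[ℂ] W) :
    IsProduct A E ↔ IsComplex A (Complex.I • E) := by
  have hinj : Function.Injective (fun v : W => Complex.I • v) :=
    smul_right_injective W Complex.I_ne_zero
  constructor
  · rintro ⟨⟨h1, h2, h3⟩, hP⟩
    refine ⟨⟨?_, ?_, ?_⟩, ?_⟩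
    · intro x; simp [smul_smul, Complex.I_mul_I, h1 x]
    · intro x; simp [h2 x]
    · intro x; simp [h3 x]
    · intro x y z
      simp only [LinearMap.smul_apply, map_smul, LinearMap.map_smul₂, smul_smul,
        Complex.I_mul_I, hP x y z]
      module
  · rintro ⟨⟨h1, h2, h3⟩, hC⟩
    refine ⟨⟨?_, ?_, ?_⟩, ?_⟩
    · intro x
      have := h1 x
      simp only [LinearMap.smul_apply, map_smul, smul_smul, Complex.I_mul_I,
        neg_smul, one_smul] at this
      exact neg_injective this
    · intro x
      have := h2 x
      simp only [LinearMap.smul_apply, map_smul] at this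
      exact hinj this
    · intro x
      have := h3 x
      simp only [LinearMap.smul_apply, map_smul] at this
      exact hinj this
    · intro x y z
      have := hC x y z
      simp only [LinearMap.smul_apply, map_smul, LinearMap.map_smul₂, smul_smul,
        Complex.I_mul_I] at this
      apply hinj
      simp only []
      rw [this]
      module
end
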